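/- arXiv:math/0701310 — 4 statements merged into one kernel-verified Lean document; each statement's English description precedes it below -/
import Mathlib

section
/- Let K be a field, r a positive integer, and V a finite-dimensional K-vector space which is the internal direct sum of subspaces (V_m)_{m ∈ ℤ/rℤ}, all of the same dimension. Let F : V → V be a K-linear endomorphism with F(V_m) ⊆ V_{m+1} for all m ∈ ℤ/rℤ. Then F^r maps V_0 into itself, and the characteristic polynomial of F on V equals the composition q(X^r), where q is the characteristic polynomial of the restriction of F^r to V_0. -/
/-!
In a basis adapted to the decomposition, `F` has a block-cyclic matrix `A`: its only nonzero
blocks map `V_m` to `V_{m+1}`. Multiplying `1 - A` on the right by a unitriangular matrix built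
from truncated powers of `A` (Gaussian elimination along the cycle) leaves a matrix that is the
identity outside the rows of block `0`, where the diagonal block becomes `1 - (A ^ r)₀₀`.
Hence `det (1 - A) = det (1 - (A ^ r)₀₀)`; rescaling by a unit `u` gives
`det (u - A) = det (u ^ r - (A ^ r)₀₀)`, and `u = T` in the Laurent polynomials yields
`χ_F (X) = χ_{F^r|V_0} (X ^ r)`.
-/

open Polynomial LaurentPolynomial

theorem ZMod.val_sub_one_of_ne_zero {k : ℕ} [NeZero k] {a : ZMod k} (ha : a ≠ 0) :
    (a - 1).val = a.val - 1 := by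
  have hk : k ≠ 1 := by rintro rfl; exact ha (Subsingleton.elim _ _)
  have h1 : (1 : ZMod k).val = 1 := ZMod.val_one'' hk
  rw [ZMod.val_sub (h1 ▸ Nat.one_le_iff_ne_zero.2 ((ZMod.val_ne_zero a).2 ha)), h1]

namespace Matrix

def IsBlockCyclic {R : Type*} [Zero R] {k : ℕ} {ι : Type*}
    (A : Matrix (ZMod k × ι) (ZMod k × ι) R) : Prop :=
  ∀ a b i j, a ≠ b + 1 → A (a, i) (b, j) = 0

theorem aeval_charpoly {R S : Type*} [CommRing R] [CommRing S] [Algebra R S] {n : Type*}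
    [Fintype n] [DecidableEq n] (M : Matrix n n R) (s : S) :
    aeval s M.charpoly = (s • (1 : Matrix n n S) - M.map (algebraMap R S)).det := by
  rw [charpoly, AlgHom.map_det]
  congr 1
  ext i j
  by_cases h : i = j <;> simp [h]

variable {R : Type*} [CommRing R] {k : ℕ} [NeZero k] {ι : Type*} [Fintype ι]
  {A : Matrix (ZMod k × ι) (ZMod k × ι) R}

theorem IsBlockCyclic.mul_apply (hA : IsBlockCyclic A) (B : Matrix (ZMod k × ι) (ZMod k × ι) R)
    (a b : ZMod k) (i j : ι) :
    (A * B) (a, i) (b, j) = ∑ l, A (a, i) (a - 1, l) * B (a - 1, l) (b, j) := by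
  rw [_root_.Matrix.mul_apply, Fintype.sum_prod_type, Finset.sum_eq_single (a - 1)]
  · refine fun c _ hc => Finset.sum_eq_zero fun l _ => ?_
    rw [hA _ _ _ _ (by rintro rfl; simp at hc), zero_mul]
  · simp

variable [DecidableEq ι]

/-- On the columns of block `b`, this is `∑_{s < k - b} A ^ s`: the series `(1 - A)⁻¹ = ∑ A ^ s`
cut off before a power of a block-cyclic `A` wraps around to block `0`. -/
def truncNeumann (A : Matrix (ZMod k × ι) (ZMod k × ι) R) : Matrix (ZMod k × ι) (ZMod k × ι) R :=
  of fun p q => if q.1.val ≤ p.1.val then (A ^ (p.1.val - q.1.val)) p q else 0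

theorem truncNeumann_apply (a b : ZMod k) (i j : ι) :
    truncNeumann A (a, i) (b, j) =
      if b.val ≤ a.val then (A ^ (a.val - b.val)) (a, i) (b, j) else 0 :=
  rfl

theorem det_truncNeumann : (truncNeumann A).det = 1 := by
  have hW : (truncNeumann A).BlockTriangular fun p => OrderDual.toDual p.1.val :=
    fun p q h => if_neg (not_le.2 h)
  rw [hW.det]
  refine Finset.prod_eq_one fun v _ => ?_
  have hblock : (truncNeumann A).toSquareBlock (fun p => OrderDual.toDual p.1.val) v = 1 := by
    ext ⟨p, hp⟩ ⟨q, hq⟩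
    have hpq : p.1.val = q.1.val := OrderDual.toDual.injective (hp.trans hq.symm)
    simp [toSquareBlock_def, truncNeumann, hpq, one_apply, Subtype.ext_iff]
  rw [hblock, det_one]

namespace IsBlockCyclic

theorem mul_truncNeumann_apply (hA : IsBlockCyclic A) (a b : ZMod k) (i j : ι) :
    (A * truncNeumann A) (a, i) (b, j) =
      if b.val ≤ (a - 1).val then (A ^ ((a - 1).val - b.val + 1)) (a, i) (b, j) else 0 := by
  rw [hA.mul_apply]
  split_ifs with h
  · simp only [truncNeumann_apply, if_pos h]
    rw [pow_succ', hA.mul_apply]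
  · simp [truncNeumann_apply, h]

theorem one_sub_mul_truncNeumann_apply_of_ne_zero (hA : IsBlockCyclic A) {a : ZMod k}
    (ha : a ≠ 0) (i : ι) (q : ZMod k × ι) :
    ((1 - A) * truncNeumann A) (a, i) q = (1 : Matrix (ZMod k × ι) (ZMod k × ι) R) (a, i) q := by
  obtain ⟨b, j⟩ := q
  have hpos : 0 < a.val := ZMod.val_pos.2 ha
  rw [sub_mul, one_mul, sub_apply, hA.mul_truncNeumann_apply, truncNeumann_apply,
    ZMod.val_sub_one_of_ne_zero ha]
  rcases lt_trichotomy b.val a.val with hlt | heq | hgt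
  · have hab : (a, i) ≠ (b, j) := by rintro ⟨⟩; exact hlt.ne rfl
    rw [if_pos hlt.le, if_pos (by omega), show a.val - 1 - b.val + 1 = a.val - b.val by omega,
      sub_self, one_apply_ne hab]
  · obtain rfl := ZMod.val_injective k heq
    rw [if_pos le_rfl, if_neg (by omega), Nat.sub_self, pow_zero, sub_zero]
  · have hab : (a, i) ≠ (b, j) := by rintro ⟨⟩; exact hgt.ne rfl
    rw [if_neg (by omega), if_neg (by omega), sub_zero, one_apply_ne hab]

theorem one_sub_mul_truncNeumann_apply_zero_zero (hA : IsBlockCyclic A) (i j : ι) :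
    ((1 - A) * truncNeumann A) (0, i) (0, j) =
      (1 - (A ^ k).submatrix (Prod.mk 0) (Prod.mk 0)) i j := by
  obtain ⟨n, rfl⟩ : ∃ n, k = n + 1 := Nat.exists_eq_succ_of_ne_zero (NeZero.ne k)
  rw [sub_mul, one_mul, sub_apply, hA.mul_truncNeumann_apply, truncNeumann_apply, zero_sub,
    ZMod.val_neg_one, ZMod.val_zero, if_pos le_rfl, if_pos (Nat.zero_le _)]
  simp [one_apply]

theorem det_one_sub (hA : IsBlockCyclic A) :
    (1 - A).det = (1 - (A ^ k).submatrix (Prod.mk 0) (Prod.mk 0)).det := by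
  set N := (1 - A) * truncNeumann A
  have hN : (1 - A).det = N.det := by rw [det_mul, det_truncNeumann, mul_one]
  have hrest : N.toSquareBlockProp (fun p => ¬p.1 = 0) = 1 := by
    ext ⟨⟨a, i⟩, ha⟩ ⟨q, hq⟩
    simp only [toSquareBlockProp_def, one_apply, Subtype.ext_iff]
    exact hA.one_sub_mul_truncNeumann_apply_of_ne_zero ha i q
  let e : {p : ZMod k × ι // p.1 = 0} ≃ ι :=
    Equiv.prodSubtypeFstEquivSubtypeProd.trans (Equiv.uniqueProd ι {a : ZMod k // a = 0})
  have hzero : N.toSquareBlockProp (fun p => p.1 = 0) =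
      (1 - (A ^ k).submatrix (Prod.mk 0) (Prod.mk 0)).submatrix e e := by
    ext ⟨⟨a, i⟩, ha⟩ ⟨⟨b, j⟩, hb⟩
    obtain rfl : a = 0 := ha
    obtain rfl : b = 0 := hb
    exact hA.one_sub_mul_truncNeumann_apply_zero_zero i j
  rw [hN, twoBlockTriangular_det N (fun p => p.1 = 0), hrest, hzero, det_submatrix_equiv_self,
    det_one, mul_one]
  rintro ⟨a, i⟩ ha ⟨b, j⟩ hb
  exact (hA.one_sub_mul_truncNeumann_apply_of_ne_zero ha i (b, j)).trans
    (one_apply_ne (by rintro ⟨⟩; exact ha hb))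

theorem det_smul_one_sub {u : R} (hu : IsUnit u) (hA : IsBlockCyclic A) :
    (u • 1 - A).det = (u ^ k • 1 - (A ^ k).submatrix (Prod.mk 0) (Prod.mk 0)).det := by
  obtain ⟨u, rfl⟩ := hu
  have hB : IsBlockCyclic ((↑u⁻¹ : R) • A) := fun a b i j h => by
    rw [smul_apply, hA a b i j h, smul_zero]
  have h1 : (u : R) • 1 - A = (u : R) • (1 - (↑u⁻¹ : R) • A) := by
    rw [smul_sub, smul_smul, Units.mul_inv, one_smul]
  have h2 : (u : R) ^ k • 1 - (A ^ k).submatrix (Prod.mk 0) (Prod.mk 0) =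
      (u : R) ^ k • (1 - (((↑u⁻¹ : R) • A) ^ k).submatrix (Prod.mk 0) (Prod.mk 0)) := by
    ext i j
    simp [_root_.smul_pow, mul_sub, ← mul_assoc, ← mul_pow]
  rw [h1, h2, det_smul, det_smul, hB.det_one_sub, Fintype.card_prod, ZMod.card, pow_mul]

theorem charpoly_eq (hA : IsBlockCyclic A) :
    A.charpoly = ((A ^ k).submatrix (Prod.mk 0) (Prod.mk 0)).charpoly.comp (X ^ k) := by
  apply toLaurent_injective
  have hL (q p : R[X]) : toLaurent (aeval q p) = aeval (toLaurent q) p :=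
    (aeval_algHom_apply toLaurentAlg q p).symm
  have hAT : IsBlockCyclic (A.map (algebraMap R R[T;T⁻¹])) := fun a b i j h => by
    simp [hA a b i j h]
  rw [comp_eq_aeval, ← aeval_X_left_apply A.charpoly, hL, hL, toLaurent_X, toLaurent_X_pow,
    aeval_charpoly, aeval_charpoly, hAT.det_smul_one_sub (isUnit_T 1), T_pow, mul_one,
    ← Matrix.map_pow, submatrix_map]

end IsBlockCyclic

end Matrix

theorem Module.End.pow_apply_mem_of_map_le {G R M : Type*} [AddMonoidWithOne G] [Semiring R]
    [AddCommMonoid M] [Module R M] {N : G → Submodule R M} {f : Module.End R M}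
    (hf : ∀ g, (N g).map f ≤ N (g + 1)) (s : ℕ) {g : G} {x : M} (hx : x ∈ N g) :
    (f ^ s) x ∈ N (g + s) := by
  induction s with
  | zero => simpa using hx
  | succ s ih =>
    rw [pow_succ', Module.End.mul_apply, Nat.cast_succ, ← add_assoc]
    exact hf _ (Submodule.mem_map_of_mem ih)

namespace DirectSum.IsInternal

variable {R M ι : Type*} [CommSemiring R] [AddCommMonoid M] [Module R M]

section

variable {G : Type*} [DecidableEq G] {N : G → Submodule R M} (h : IsInternal N)
  (b : ∀ g, Module.Basis ι R (N g))

noncomputable def collectedBasisProd : Module.Basis (G × ι) R M :=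
  (h.collectedBasis b).reindex (Equiv.sigmaEquivProd G ι)

theorem collectedBasisProd_apply (g : G) (i : ι) : h.collectedBasisProd b (g, i) = b g i := by
  rw [collectedBasisProd, Module.Basis.reindex_apply, collectedBasis_coe]
  rfl

theorem collectedBasisProd_repr_of_mem {g : G} {x : M} (hx : x ∈ N g) (i : ι) :
    (h.collectedBasisProd b).repr x (g, i) = (b g).repr ⟨x, hx⟩ i :=
  h.collectedBasis_repr_of_mem b hx

theorem collectedBasisProd_repr_of_mem_ne {g g' : G} (hg : g ≠ g') {x : M} (hx : x ∈ N g)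
    (i : ι) : (h.collectedBasisProd b).repr x (g', i) = 0 :=
  h.collectedBasis_repr_of_mem_ne b hg hx

theorem submatrix_toMatrix_collectedBasisProd [Fintype G] [Fintype ι] [DecidableEq ι]
    (f : Module.End R M) (g : G) (hf : ∀ x ∈ N g, f x ∈ N g) :
    (LinearMap.toMatrix (h.collectedBasisProd b) (h.collectedBasisProd b) f).submatrix
      (Prod.mk g) (Prod.mk g) = LinearMap.toMatrix (b g) (b g) (f.restrict hf) := by
  ext i j
  rw [Matrix.submatrix_apply, LinearMap.toMatrix_apply, LinearMap.toMatrix_apply,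
    collectedBasisProd_apply, h.collectedBasisProd_repr_of_mem b (hf _ (b g j).2)]
  rfl

end

theorem isBlockCyclic_toMatrix_collectedBasisProd [Fintype ι] [DecidableEq ι] {k : ℕ} [NeZero k]
    {N : ZMod k → Submodule R M} (h : IsInternal N) (b : ∀ m, Module.Basis ι R (N m))
    {f : Module.End R M} (hf : ∀ m, (N m).map f ≤ N (m + 1)) :
    (LinearMap.toMatrix (h.collectedBasisProd b) (h.collectedBasisProd b) f).IsBlockCyclic :=
  fun a c i j hac => by
    rw [LinearMap.toMatrix_apply, collectedBasisProd_apply]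
    exact h.collectedBasisProd_repr_of_mem_ne b (Ne.symm hac)
      (hf c (Submodule.mem_map_of_mem (b c j).2)) i

end DirectSum.IsInternal

/-- If `V` is the internal direct sum of subspaces `(V_m)_{m ∈ ℤ/rℤ}`, all of the same
dimension, and `F` is an endomorphism with `F(V_m) ⊆ V_{m+1}` for all `m`, then `F^r`
maps `V_0` into itself and the characteristic polynomial of `F` equals `q(X^r)`, where
`q` is the characteristic polynomial of the restriction of `F^r` to `V_0`. -/
theorem stmt7 (K : Type*) [Field K] (V : Type*) [AddCommGroup V] [Module K V]
    [FiniteDimensional K V]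
    (r : ℕ) (hr : 0 < r) (Vm : ZMod r → Submodule K V)
    (hint : DirectSum.IsInternal Vm)
    (hdim : ∀ m m' : ZMod r, Module.finrank K (Vm m) = Module.finrank K (Vm m'))
    (F : Module.End K V) (hF : ∀ m : ZMod r, Submodule.map F (Vm m) ≤ Vm (m + 1)) :
    ∃ h : ∀ x ∈ Vm 0, (F ^ r) x ∈ Vm 0,
      LinearMap.charpoly (F : V →ₗ[K] V) =
        (LinearMap.charpoly ((F ^ r : Module.End K V).restrict h)).comp
          (Polynomial.X ^ r) := by
  have : NeZero r := ⟨hr.ne'⟩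
  have hFr : ∀ x ∈ Vm 0, (F ^ r) x ∈ Vm 0 := fun x hx => by
    simpa using Module.End.pow_apply_mem_of_map_le hF r hx
  refine ⟨hFr, ?_⟩
  let b m := Module.finBasisOfFinrankEq K (Vm m) (hdim m 0)
  rw [← LinearMap.charpoly_toMatrix F (hint.collectedBasisProd b),
    (hint.isBlockCyclic_toMatrix_collectedBasisProd b hF).charpoly_eq, LinearMap.toMatrix_pow,
    hint.submatrix_toMatrix_collectedBasisProd b _ 0 hFr, LinearMap.charpoly_toMatrix]
end

section
/- Let K be a field, r a positive integer, and V a finite-dimensional K-vector space which is the internal direct sum of subspaces (V_m)_{m ∈ ℤ/rℤ}, all of the same dimension. Let F : V → V be a K-linear endomorphism with F(V_m) ⊆ V_{m+1} for all m ∈ ℤ/rℤ. Then there exists a monic polynomial q ∈ K[X] such that the characteristic polynomial of F equals q composed with X^r; in other words, the characteristic polynomial of F is a polynomial in T^r. -/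
/-!
Grade a basis adapted to the decomposition by `ℤ/rℤ`; the matrix of `F` then raises degrees by
one. In the Leibniz expansion of a principal minor of size `k`, a nonzero term along a
permutation `σ` forces `deg (σ i) = deg i + 1` for every `i`, and summing over `i` gives
`k = 0` in `ℤ/rℤ`. Hence the coefficient of `T ^ (n - k)` in the characteristic polynomial, a
signed sum of such minors, vanishes unless `r ∣ k`; since `r ∣ n = r · dim V₀`, only powers of
`T ^ r` survive.
-/

open Polynomial

theorem Polynomial.expand_contract_of_coeff_eq_zero {R : Type*} [CommSemiring R] {p : ℕ}
    (hp : p ≠ 0) {f : R[X]} (hf : ∀ n, ¬p ∣ n → f.coeff n = 0) :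
    expand R p (contract p f) = f := by
  ext n
  rw [coeff_expand hp.bot_lt, coeff_contract hp]
  split_ifs with h
  · rw [Nat.div_mul_cancel h]
  · exact (hf n h).symm

theorem DirectSum.IsInternal.finrank_eq_sum {K V ι : Type*} [Field K] [AddCommGroup V]
    [Module K V] [FiniteDimensional K V] [Fintype ι] [DecidableEq ι] {A : ι → Submodule K V}
    (hA : DirectSum.IsInternal A) : Module.finrank K V = ∑ i, Module.finrank K (A i) := by
  rw [Module.finrank_eq_card_basis (hA.collectedBasis fun i => Module.finBasis K (A i)),
    Fintype.card_sigma]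
  simp only [Fintype.card_fin]

namespace Matrix

variable {n R G : Type*} [Fintype n] [DecidableEq n] [CommRing R] [AddCommGroup G]

theorem det_eq_zero_of_shifts_degree (b : n → G) (g : G) {M : Matrix n n R}
    (hM : ∀ i j, M i j ≠ 0 → b i = b j + g) (hg : Fintype.card n • g ≠ 0) : M.det = 0 := by
  rw [det_apply]
  refine Finset.sum_eq_zero fun σ _ => ?_
  by_contra hσ
  have hshift : ∀ i, b (σ i) = b i + g := fun i => hM _ _ fun h => hσ <|
    (congrArg _ (Finset.prod_eq_zero (f := fun k => M (σ k) k) (Finset.mem_univ i) h)).trans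
      (smul_zero _)
  have hsum := Equiv.sum_comp σ b
  simp only [hshift, Finset.sum_add_distrib, Finset.sum_const, Finset.card_univ] at hsum
  exact hg (add_eq_left.mp hsum)

theorem zsmul_eq_zero_of_charpoly_coeff_ne_zero [Nontrivial R] (b : n → G) (g : G)
    {M : Matrix n n R} (hM : ∀ i j, M i j ≠ 0 → b i = b j + g) {j : ℕ}
    (hj : M.charpoly.coeff j ≠ 0) : ((Fintype.card n : ℤ) - j) • g = 0 := by
  have hjn : j ≤ Fintype.card n := by
    by_contra h
    exact hj (coeff_eq_zero_of_natDegree_lt (by rw [charpoly_natDegree_eq_dim]; omega))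
  rw [← Nat.cast_sub hjn, natCast_zsmul]
  by_contra hg
  refine hj ?_
  rw [← Nat.sub_sub_self hjn, charpoly_coeff_eq_sum_minors _ _ (Nat.sub_le _ _)]
  refine mul_eq_zero_of_right _ (Finset.sum_eq_zero fun s hs => ?_)
  refine det_eq_zero_of_shifts_degree (b ∘ Subtype.val) g (fun i j h => hM _ _ h) ?_
  rwa [Fintype.card_coe, (Finset.mem_powersetCard.mp hs).2]

end Matrix

theorem LinearMap.zsmul_eq_zero_of_charpoly_coeff_ne_zero {K V G : Type*} [Field K]
    [AddCommGroup V] [Module K V] [FiniteDimensional K V] [AddCommGroup G] [Fintype G]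
    [DecidableEq G] {Vm : G → Submodule K V} (hVm : DirectSum.IsInternal Vm) (g : G) {F : Module.End K V}
    (hF : ∀ m, (Vm m).map F ≤ Vm (m + g)) {j : ℕ} (hj : F.charpoly.coeff j ≠ 0) :
    ((Module.finrank K V : ℤ) - j) • g = 0 := by
  let B := hVm.collectedBasis fun m => Module.finBasis K (Vm m)
  rw [← LinearMap.charpoly_toMatrix F B] at hj
  rw [Module.finrank_eq_card_basis B]
  refine Matrix.zsmul_eq_zero_of_charpoly_coeff_ne_zero Sigma.fst g (fun i j hij => ?_) hj
  by_contra hne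
  rw [LinearMap.toMatrix_apply] at hij
  exact hij (hVm.collectedBasis_repr_of_mem_ne _ (Ne.symm hne)
    (hF j.1 (Submodule.mem_map_of_mem (hVm.collectedBasis_mem _ j))))

/-- If `V` is the internal direct sum of subspaces `(V_m)_{m ∈ ℤ/rℤ}`, all of the same
dimension, and `F` is an endomorphism with `F(V_m) ⊆ V_{m+1}` for all `m`, then the
characteristic polynomial of `F` is a (monic) polynomial in `T^r`. -/
theorem stmt8 (K : Type*) [Field K] (V : Type*) [AddCommGroup V] [Module K V]
    [FiniteDimensional K V]
    (r : ℕ) (hr : 0 < r) (Vm : ZMod r → Submodule K V)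
    (hint : DirectSum.IsInternal Vm)
    (hdim : ∀ m m' : ZMod r, Module.finrank K (Vm m) = Module.finrank K (Vm m'))
    (F : Module.End K V) (hF : ∀ m : ZMod r, Submodule.map F (Vm m) ≤ Vm (m + 1)) :
    ∃ q : Polynomial K, q.Monic ∧
      LinearMap.charpoly (F : V →ₗ[K] V) = q.comp (Polynomial.X ^ r) := by
  have : NeZero r := ⟨hr.ne'⟩
  have hrV : r ∣ Module.finrank K V := by
    rw [hint.finrank_eq_sum, Finset.sum_congr rfl fun m _ => hdim m 0]
    simp [ZMod.card]
  have hcoeff : ∀ j, ¬r ∣ j → F.charpoly.coeff j = 0 := by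
    intro j hj
    by_contra hne
    have hrj := LinearMap.zsmul_eq_zero_of_charpoly_coeff_ne_zero hint 1 hF hne
    rw [zsmul_one, Int.cast_sub, Int.cast_natCast, Int.cast_natCast,
      (ZMod.natCast_eq_zero_iff _ _).mpr hrV, zero_sub, neg_eq_zero,
      ZMod.natCast_eq_zero_iff] at hrj
    exact hj hrj
  have hexpand := Polynomial.expand_contract_of_coeff_eq_zero hr.ne' hcoeff
  refine ⟨contract r F.charpoly, ?_, ?_⟩
  · rw [← monic_expand_iff hr, hexpand]
    exact F.charpoly_monic
  · rw [← expand_eq_comp_X_pow, hexpand]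
end

section
/- Let G be a group of order 48 having a normal subgroup N isomorphic to the symmetric group S₄ on four letters. Then G is isomorphic to S₄ × ℤ/2ℤ. -/
set_option maxRecDepth 40000 in
private theorem key15 : ∀ A B : Equiv.Perm (Fin 4), (A^4 = 1 ∧ A^2 ≠ 1 ∧ B^2 = 1 ∧ B ≠ 1 ∧
    (A*B)^3 = 1 ∧ A*B ≠ 1) →
    ∃ g : Equiv.Perm (Fin 4), A = g * (finRotate 4) * g⁻¹ ∧ B = g * (Equiv.swap 0 1) * g⁻¹ := by
  decide

private theorem closure15 : Subgroup.closure {finRotate 4, Equiv.swap (0 : Fin 4) 1} = ⊤ := by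
  have h1 : (finRotate 4).IsCycle := ⟨0, by decide, by decide⟩
  have h2 : (finRotate 4).support = Finset.univ := by decide
  exact Equiv.Perm.closure_cycle_adjacent_swap h1 h2 0

private theorem central15 : ∀ y : Equiv.Perm (Fin 4), (∀ z, y * z = z * y) → y = 1 := by decide

private theorem aut_inner15 (F : Equiv.Perm (Fin 4) ≃* Equiv.Perm (Fin 4)) :
    ∃ g : Equiv.Perm (Fin 4), ∀ x, F x = g * x * g⁻¹ := by
  have hFne : ∀ x : Equiv.Perm (Fin 4), x ≠ 1 → F x ≠ 1 := fun x hx => by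
    rw [ne_eq, ← map_one F, EmbeddingLike.apply_eq_iff_eq]; exact hx
  obtain ⟨g, hg1, hg2⟩ := key15 (F (finRotate 4)) (F (Equiv.swap 0 1))
    ⟨by rw [← map_pow, show (finRotate 4)^4 = 1 by decide, map_one],
     by rw [← map_pow]; exact hFne _ (by decide),
     by rw [← map_pow, show (Equiv.swap (0:Fin 4) 1)^2 = 1 by decide, map_one],
     hFne _ (by decide),
     by rw [← map_mul, ← map_pow,
       show ((finRotate 4) * Equiv.swap (0:Fin 4) 1)^3 = 1 by decide, map_one],
     by rw [← map_mul]; exact hFne _ (by decide)⟩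
  refine ⟨g, fun x => ?_⟩
  have : (F : Equiv.Perm (Fin 4) →* Equiv.Perm (Fin 4)) =
      (MulAut.conj g : MulAut (Equiv.Perm (Fin 4))).toMonoidHom := by
    apply MonoidHom.eq_of_eqOn_dense closure15
    rintro y (rfl | rfl) <;> simp [hg1, hg2, MulAut.conj]
  exact DFunLike.congr_fun this x

/-- Any group of order 48 with a normal subgroup isomorphic to `S₄` is isomorphic to
`S₄ × ℤ/2ℤ`. -/
theorem stmt15 (G : Type*) [Group G] [Fintype G] (hG : Fintype.card G = 48)
    (N : Subgroup G) [N.Normal] (h : Nonempty (↥N ≃* Equiv.Perm (Fin 4))) :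
    Nonempty (G ≃* Equiv.Perm (Fin 4) × Multiplicative (ZMod 2)) := by
  obtain ⟨e⟩ := h
  have hG' : Nat.card G = 48 := by rw [Nat.card_eq_fintype_card, hG]
  have hN24 : Nat.card N = 24 := by
    rw [Nat.card_congr e.toEquiv, Nat.card_eq_fintype_card]
    decide
  -- triviality of center of N
  have hcent : ∀ x : ↥N, (∀ y : ↥N, x * y = y * x) → x = 1 := by
    intro x hx
    have hz : ∀ w : Equiv.Perm (Fin 4), e x * w = w * e x := by
      intro w
      have := hx (e.symm w)
      have := congrArg e this
      simpa [map_mul] using this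
    have h1 : e x = 1 := central15 _ hz
    have := congrArg e.symm h1
    simpa using this
  set φ : G →* MulAut ↥N := MulAut.conjNormal with hφ
  -- elements of N in the kernel are trivial
  have hkerN : ∀ x : G, x ∈ N → x ∈ φ.ker → x = 1 := by
    intro x hxN hxK
    have h1 : (⟨x, hxN⟩ : ↥N) = 1 := by
      apply hcent
      intro y
      have : φ x y = y := by rw [MonoidHom.mem_ker.mp hxK]; rfl
      have hco : x * (y : G) * x⁻¹ = y := by
        rw [← MulAut.conjNormal_apply x y, this]
      ext
      simp only [Subgroup.coe_mul]
      calc x * (y : G) = (x * (y : G) * x⁻¹) * x := by group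
        _ = (y : G) * x := by rw [hco]
    exact congrArg Subtype.val h1
  -- the conjugation map restricted to N is injective
  have hinjN : Function.Injective (φ.comp N.subtype) := by
    rw [injective_iff_map_eq_one]
    intro n hn
    have : (n : G) = 1 := hkerN n n.2 (MonoidHom.mem_ker.mpr hn)
    exact Subtype.ext this
  -- every conjugation automorphism is realized by an element of N
  have hrange : φ.range = (φ.comp N.subtype).range := by
    apply le_antisymm
    · rintro _ ⟨g, rfl⟩
      set F : Equiv.Perm (Fin 4) ≃* Equiv.Perm (Fin 4) :=
        (e.symm.trans (φ g : ↥N ≃* ↥N)).trans e with hF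
      obtain ⟨p, hp⟩ := aut_inner15 F
      set n : ↥N := e.symm p with hn
      have hen : e n = p := by simp [hn]
      have hgn : φ g = φ n := by
        ext m
        have h1 : e ((φ g) m) = p * e m * p⁻¹ := by
          have := hp (e m)
          simpa [hF] using this
        have h2 : e ((φ (n : G)) m) = p * e m * p⁻¹ := by
          have hv : φ (n : G) = MulAut.conj n := MulAut.conjNormal_val
          rw [hv]
          have : MulAut.conj n m = n * m * n⁻¹ := rfl
          rw [this, map_mul, map_mul, hen, map_inv, hen]
        have := h1.trans h2.symm
        exact congrArg Subtype.val (e.injective this)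
      exact ⟨n, hgn.symm⟩
    · rintro _ ⟨n, rfl⟩
      exact ⟨(n : G), rfl⟩
  have hrange24 : Nat.card φ.range = 24 := by
    rw [hrange, ← hN24]
    exact (Nat.card_congr (MonoidHom.ofInjective hinjN).toEquiv).symm
  have hker2 : Nat.card φ.ker = 2 := by
    have h1 := Subgroup.card_eq_card_quotient_mul_card_subgroup φ.ker
    have h2 : Nat.card (G ⧸ φ.ker) = 24 := by
      rw [Nat.card_congr (QuotientGroup.quotientKerEquivRange φ).toEquiv, hrange24]
    rw [hG', h2] at h1
    omega
  -- disjointness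
  have hdisj : Disjoint N φ.ker := by
    rw [Subgroup.disjoint_def]
    intro x hxN hxK
    exact hkerN x hxN hxK
  -- elements of N and ker commute
  have hcomm : ∀ (m : ↥N) (c : ↥φ.ker), Commute (N.subtype m) (φ.ker.subtype c) := by
    intro m c
    exact Subgroup.commute_of_normal_of_disjoint N φ.ker inferInstance inferInstance hdisj
      (m : G) (c : G) m.2 c.2
  set ψ : ↥N × ↥φ.ker →* G := (N.subtype).noncommCoprod (φ.ker.subtype) hcomm with hψ
  have hψinj : Function.Injective ψ := by
    rw [injective_iff_map_eq_one]
    rintro ⟨n, c⟩ hnc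
    have hnc' : (n : G) * (c : G) = 1 := hnc
    have hcn : (n : G) = (c : G)⁻¹ := eq_inv_of_mul_eq_one_left hnc'
    have hnk : (n : G) ∈ φ.ker := by rw [hcn]; exact inv_mem c.2
    have hn1 : (n : G) = 1 := hkerN n n.2 hnk
    have hc1 : (c : G) = 1 := by
      rw [hcn] at hn1; rwa [inv_eq_one] at hn1
    exact Prod.ext (Subtype.ext hn1) (Subtype.ext hc1)
  have hψbij : Function.Bijective ψ := by
    rw [Nat.bijective_iff_injective_and_card]
    refine ⟨hψinj, ?_⟩
    rw [Nat.card_prod, hN24, hker2, hG']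
  have E : ↥N × ↥φ.ker ≃* G := MulEquiv.ofBijective ψ hψbij
  haveI : Fact (Nat.Prime 2) := ⟨Nat.prime_two⟩
  haveI : IsCyclic ↥φ.ker := isCyclic_of_prime_card hker2
  have eC : ↥φ.ker ≃* Multiplicative (ZMod 2) :=
    mulEquivOfCyclicCardEq (by rw [hker2]; simp)
  exact ⟨E.symm.trans (e.prodCongr eC)⟩
end

section
/- Let K = ℚ(i) be the field of Gaussian rationals. The polynomial X³ − 3X − 2i is irreducible over K. -/
/-!
Substituting `y = -i x` turns a root `x ∈ ℚ(i)` of `X³ - 3X - 2i` into a root `y ∈ ℚ(i)` of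
`X³ + 3X + 2`, which is irreducible over `ℚ` (it has no root modulo 5). A rational cubic
irreducible over `ℚ` cannot acquire a root in the quadratic field `ℚ(i)`, since the degree of
the minimal polynomial of that root would divide `[ℚ(i) : ℚ] = 2`. A cubic without roots is
irreducible.
-/

open Polynomial

theorem Polynomial.Irreducible.natDegree_dvd_finrank_of_aeval_eq_zero {K L : Type*} [Field K]
    [Field L] [Algebra K L] [FiniteDimensional K L] {f : K[X]} (hf : Irreducible f) {x : L}
    (hx : aeval x f = 0) : f.natDegree ∣ Module.finrank K L := by
  rw [minpoly.Irreducible.eq_minpoly hf hx,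
    natDegree_C_mul (leadingCoeff_ne_zero.mpr hf.ne_zero)]
  exact minpoly.degree_dvd (Algebra.IsIntegral.isIntegral x)

theorem irreducible_X_pow_three_add_three_mul_X_add_two_zmod_five :
    Irreducible (X ^ 3 + 3 * X + 2 : (ZMod 5)[X]) := by
  have hnoRoot : ∀ z : ZMod 5, z ^ 3 + 3 * z + 2 ≠ 0 := by decide
  have := Fact.mk Nat.prime_five
  have hdeg : (X ^ 3 + 3 * X + 2 : (ZMod 5)[X]).natDegree = 3 := by compute_degree!
  exact irreducible_of_degree_le_three_of_not_isRoot (by rw [hdeg]; decide)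
    fun z hz => hnoRoot z (by simpa using hz)

theorem irreducible_X_pow_three_add_three_mul_X_add_two_rat :
    Irreducible (X ^ 3 + 3 * X + 2 : ℚ[X]) := by
  have := Fact.mk Nat.prime_five
  have hmonic : (X ^ 3 + 3 * X + 2 : ℤ[X]).Monic := by monicity!
  have hZ : Irreducible (X ^ 3 + 3 * X + 2 : ℤ[X]) :=
    hmonic.irreducible_of_irreducible_map (Int.castRingHom (ZMod 5)) _
      (by simpa using irreducible_X_pow_three_add_three_mul_X_add_two_zmod_five)
  simpa using (IsPrimitive.Int.irreducible_iff_irreducible_map_cast hmonic.isPrimitive).mp hZ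

theorem IsPrimitiveRoot.sq_eq_neg_one_of_four {R : Type*} [CommRing R] [NoZeroDivisors R]
    {i : R} (hi : IsPrimitiveRoot i 4) : i ^ 2 = -1 :=
  (hi.pow (by norm_num) (by norm_num : 4 = 2 * 2)).eq_neg_one_of_two_right

theorem finrank_cyclotomicField_four_rat : Module.finrank ℚ (CyclotomicField 4 ℚ) = 2 := by
  have : IsCyclotomicExtension {4} ℚ (CyclotomicField 4 ℚ) :=
    CyclotomicField.isCyclotomicExtension 4 ℚ
  rw [IsCyclotomicExtension.Rat.finrank 4 (CyclotomicField 4 ℚ)]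
  rfl

/-- The polynomial `X³ − 3X − 2i` is irreducible over `ℚ(i)` (realized as the fourth
cyclotomic field, with `i` a primitive fourth root of unity). -/
theorem stmt19 (i : CyclotomicField 4 ℚ) (hi : IsPrimitiveRoot i 4) :
    Irreducible (Polynomial.X ^ 3 - 3 * Polynomial.X - Polynomial.C (2 * i) :
      Polynomial (CyclotomicField 4 ℚ)) := by
  have hdeg : (X ^ 3 - 3 * X - C (2 * i)).natDegree = 3 := by compute_degree!
  refine irreducible_of_degree_le_three_of_not_isRoot (by rw [hdeg]; decide) fun x hx => ?_
  have hroot : x ^ 3 - 3 * x - 2 * i = 0 := by simpa using hx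
  have hshift : aeval (-(i * x)) (X ^ 3 + 3 * X + 2 : ℚ[X]) = 0 := by
    simp only [map_add, map_mul, map_pow, aeval_X, map_ofNat]
    linear_combination i * hroot + (2 - i * x ^ 3) * hi.sq_eq_neg_one_of_four
  have hdvd := irreducible_X_pow_three_add_three_mul_X_add_two_rat
    |>.natDegree_dvd_finrank_of_aeval_eq_zero hshift
  rw [finrank_cyclotomicField_four_rat, show (X ^ 3 + 3 * X + 2 : ℚ[X]).natDegree = 3 by
    compute_degree!] at hdvd
  exact absurd hdvd (by decide)
end
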